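/- For every n ≥ 2, any two vertices x, y of Q_n with opposite parities, and any edge f of Q_n with f ≠ xy, there exists a Hamiltonian path in Q_n joining x and y that contains the edge f. -/

import Mathlib

open SimpleGraph Finset

/-- The n-dimensional hypercube: vertices are 0/1 vectors, adjacent iff
Hamming distance is 1. -/
def cube (n : ℕ) : SimpleGraph (Fin n → ZMod 2) where
  Adj x y := hammingDist x y = 1
  symm := ⟨fun x y h => by simpa [hammingDist_comm] using h⟩
  loopless := ⟨fun x h => by simp [hammingDist_self] at h⟩

/-- Parity of a vertex: sum of coordinates mod 2. -/
def parity {n : ℕ} (u : Fin n → ZMod 2) : ZMod 2 := ∑ i, u i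

/-!
Induction on `n`, starting from the 4-cycle `Q₂`. For the step, choose a coordinate in which the
two ends of `f` agree; splitting along it presents `Q_{n+1}` as the prism `Q_n □ K₂` with `f`
inside one layer. A Hamiltonian path of the prism is assembled from Hamiltonian paths of the
layers in one of two patterns: a path through one layer followed, across a rung, by a path
through the other; or a path through one layer that, instead of using one of its edges `ab`,
crosses to the other layer at `a`, traverses it entirely and returns at `b`. Which pattern is
used depends on the layers of `x` and `y`, and the induction hypothesis routes the appropriate
layer path through `f`; since `Q_n` has minimum degree `n ≥ 2`, there is always an edge
`ab ≠ f` or a neighbour `z` of `x` with `xz ≠ f` to choose.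
-/

local notation "K₂" => (⊤ : SimpleGraph (ZMod 2))

lemma zmod_two_eq_or_eq_of_ne {i j : ZMod 2} (hij : i ≠ j) (k : ZMod 2) : k = i ∨ k = j := by
  revert i j k; decide

lemma zmod_two_add_ne_add_iff {i j : ZMod 2} (hij : i ≠ j) (a b : ZMod 2) :
    i + a ≠ j + b ↔ a = b := by
  revert i j a b; decide

namespace SimpleGraph

variable {V : Type*} {G : SimpleGraph V}

def IsEdgeHamLaceable [DecidableEq V] (G : SimpleGraph V) (c : V → ZMod 2) : Prop :=
  ∀ x y, c x ≠ c y → ∀ f ∈ G.edgeSet, f ≠ s(x, y) →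
    ∃ w : G.Walk x y, w.IsHamiltonian ∧ f ∈ w.edges

lemma Walk.exists_eq_append_cons_of_mem_edges {x y : V} {e : Sym2 V} (w : G.Walk x y)
    (he : e ∈ w.edges) :
    ∃ (a b : V) (hab : G.Adj a b) (p : G.Walk x a) (q : G.Walk b y),
      s(a, b) = e ∧ w = p.append (cons hab q) := by
  induction w with
  | nil => simp at he
  | cons h w ih =>
    rcases List.mem_cons.mp he with rfl | he
    · exact ⟨_, _, h, nil, w, rfl, rfl⟩
    · obtain ⟨a, b, hab, p, q, rfl, rfl⟩ := ih he
      exact ⟨a, b, hab, cons h p, q, rfl, (Walk.cons_append _ _ _).symm⟩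

lemma exists_adj_sym2_ne {v : V} (h : (G.neighborSet v).Nontrivial) (e : Sym2 V) :
    ∃ w, G.Adj v w ∧ s(v, w) ≠ e := by
  obtain ⟨a, ha, b, hb, hab⟩ := h
  by_cases hae : s(v, a) = e
  · exact ⟨b, hb, fun hbe => hab (Sym2.congr_right.mp (hae.trans hbe.symm))⟩
  · exact ⟨a, ha, hae⟩

lemma three_le_card_of_neighborSet_nontrivial [Fintype V] {v : V}
    (h : (G.neighborSet v).Nontrivial) : 3 ≤ Fintype.card V := by
  classical
  obtain ⟨a, ha, b, hb, hab⟩ := h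
  have hcard : ({v, a, b} : Finset V).card = 3 :=
    card_eq_three.mpr ⟨v, a, b, G.ne_of_adj ha, G.ne_of_adj hb, hab, rfl⟩
  exact hcard ▸ card_le_univ _

lemma Walk.support_boxProdLeft {x y : V} (p : G.Walk x y) (i : ZMod 2) :
    (p.boxProdLeft K₂ i).support = p.support.map (·, i) :=
  support_map _ _

lemma Walk.edges_boxProdLeft {x y : V} (p : G.Walk x y) (i : ZMod 2) :
    (p.boxProdLeft K₂ i).edges = p.edges.map (Sym2.map (·, i)) :=
  edges_map _ _

lemma boxProd_top_adj_rung (v : V) {i j : ZMod 2} (hij : i ≠ j) : (G □ K₂).Adj (v, i) (v, j) :=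
  boxProd_adj_right.mpr hij

section Hamiltonian

variable [DecidableEq V]

lemma Walk.IsHamiltonian.reverse {x y : V} {w : G.Walk x y} (hw : w.IsHamiltonian) :
    w.reverse.IsHamiltonian := fun v => by
  rw [support_reverse, List.count_reverse]
  exact hw v

lemma Walk.IsHamiltonian.exists_eq_append_cons_ne [Fintype V] {x y : V} {w : G.Walk x y}
    (hw : w.IsHamiltonian) (hcard : 3 ≤ Fintype.card V) (f : Sym2 V) :
    ∃ (a b : V) (hab : G.Adj a b) (p : G.Walk x a) (q : G.Walk b y),
      s(a, b) ≠ f ∧ w = p.append (cons hab q) := by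
  obtain ⟨e, he, hef⟩ : ∃ e ∈ w.edges, e ≠ f := by
    by_contra! hall
    have hnodup := hw.isPath.edges_nodup
    rw [List.eq_replicate_iff.mpr ⟨rfl, hall⟩, List.nodup_replicate, length_edges,
      hw.length_eq] at hnodup
    omega
  obtain ⟨a, b, hab, p, q, rfl, rfl⟩ := w.exists_eq_append_cons_of_mem_edges he
  exact ⟨a, b, hab, p, q, hef, rfl⟩

lemma IsEdgeHamLaceable.exists_isHamiltonian {c : V → ZMod 2} (hG : G.IsEdgeHamLaceable c)
    (hdeg : ∀ v, (G.neighborSet v).Nontrivial) {x y : V} (hxy : c x ≠ c y) :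
    ∃ w : G.Walk x y, w.IsHamiltonian := by
  obtain ⟨z, hz, hne⟩ := exists_adj_sym2_ne (hdeg x) s(x, y)
  obtain ⟨w, hw, -⟩ := hG x y hxy s(x, z) hz hne
  exact ⟨w, hw⟩

lemma Walk.isHamiltonian_of_support_perm_layers {x y a b : V} {P : G.Walk x y} {R : G.Walk a b}
    (hP : P.IsHamiltonian) (hR : R.IsHamiltonian) {i j : ZMod 2} (hij : i ≠ j)
    {u w : V × ZMod 2} {W : (G □ K₂).Walk u w}
    (hW : W.support.Perm (P.support.map (·, i) ++ R.support.map (·, j))) : W.IsHamiltonian := by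
  -- `IsHamiltonian` counts with the `BEq` instance derived from `DecidableEq`, not `instBEqProd`.
  let _ : BEq (V × ZMod 2) := instBEqOfDecidableEq
  rintro ⟨v, k⟩
  have hout {l l' : ZMod 2} (h : l ≠ l') (L : List V) : (L.map (·, l)).count (v, l') = 0 :=
    List.count_eq_zero.mpr (by simp [h])
  rw [hW.count_eq, List.count_append]
  rcases zmod_two_eq_or_eq_of_ne hij k with rfl | rfl
  · rw [List.count_map_of_injective _ _ (Prod.mk_left_injective k), hout hij.symm, hP]
  · rw [List.count_map_of_injective _ _ (Prod.mk_left_injective k), hout hij, hR]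

lemma exists_isHamiltonian_boxProd_top_of_two_layers {x z y : V} {P : G.Walk x z}
    {R : G.Walk z y} (hP : P.IsHamiltonian) (hR : R.IsHamiltonian) {i j : ZMod 2} (hij : i ≠ j) :
    ∃ W : (G □ K₂).Walk (x, i) (y, j), W.IsHamiltonian ∧ ∀ e ∈ P.edges, e.map (·, i) ∈ W.edges := by
  refine ⟨(P.boxProdLeft K₂ i).append (.cons (boxProd_top_adj_rung z hij) (R.boxProdLeft K₂ j)),
    Walk.isHamiltonian_of_support_perm_layers hP hR hij ?_, fun e he => ?_⟩
  · simp only [Walk.support_append, Walk.support_cons, List.tail_cons, Walk.support_boxProdLeft]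
    rfl
  · simp only [Walk.edges_append, Walk.edges_boxProdLeft]
    exact List.mem_append_left _ (List.mem_map_of_mem he)

lemma exists_isHamiltonian_boxProd_top_of_detour {x a b y : V} {p : G.Walk x a} {q : G.Walk b y}
    (hab : G.Adj a b) (hw : (p.append (.cons hab q)).IsHamiltonian) {R : G.Walk a b}
    (hR : R.IsHamiltonian) {i j : ZMod 2} (hij : i ≠ j) :
    ∃ W : (G □ K₂).Walk (x, i) (y, i), W.IsHamiltonian ∧
      (∀ e ∈ (p.append (.cons hab q)).edges, e ≠ s(a, b) → e.map (·, i) ∈ W.edges) ∧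
      ∀ e ∈ R.edges, e.map (·, j) ∈ W.edges := by
  refine ⟨(p.boxProdLeft K₂ i).append (.cons (boxProd_top_adj_rung a hij)
    ((R.boxProdLeft K₂ j).append (.cons (boxProd_top_adj_rung b hij.symm) (q.boxProdLeft K₂ i)))),
    Walk.isHamiltonian_of_support_perm_layers hw hR hij ?_, fun e he hne => ?_, fun e he => ?_⟩
  · simp only [Walk.support_append, Walk.support_cons, List.tail_cons, Walk.support_boxProdLeft,
      List.map_append, List.append_assoc]
    exact List.Perm.append_left _ List.perm_append_comm
  · simp only [Walk.edges_append, Walk.edges_cons, List.mem_append, List.mem_cons, hne,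
      false_or] at he
    simp only [Walk.edges_append, Walk.edges_cons, Walk.edges_boxProdLeft, List.mem_append,
      List.mem_cons]
    rcases he with he | he
    · exact .inl (List.mem_map_of_mem he)
    · exact .inr (.inr (.inr (.inr (List.mem_map_of_mem he))))
  · simp only [Walk.edges_append, Walk.edges_cons, Walk.edges_boxProdLeft, List.mem_append,
      List.mem_cons]
    exact .inr (.inr (.inl (List.mem_map_of_mem he)))

namespace IsEdgeHamLaceable

variable {c : V → ZMod 2}

lemma exists_boxProd_top_of_ends_in_layer [Fintype V] (hG : G.IsEdgeHamLaceable c)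
    (hc : ∀ u v, G.Adj u v → c u ≠ c v) (hdeg : ∀ v, (G.neighborSet v).Nontrivial)
    {x y u v : V} (hxy : c x ≠ c y) (huv : G.Adj u v) (hne : s(u, v) ≠ s(x, y)) (i : ZMod 2) :
    ∃ W : (G □ K₂).Walk (x, i) (y, i), W.IsHamiltonian ∧ s((u, i), (v, i)) ∈ W.edges := by
  obtain ⟨P, hP, huvP⟩ := hG x y hxy s(u, v) huv hne
  obtain ⟨a, b, hab, p, q, habuv, rfl⟩ :=
    hP.exists_eq_append_cons_ne (three_le_card_of_neighborSet_nontrivial (hdeg x)) s(u, v)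
  obtain ⟨R, hR⟩ := hG.exists_isHamiltonian hdeg (hc a b hab)
  obtain ⟨W, hW, hWP, -⟩ :=
    exists_isHamiltonian_boxProd_top_of_detour hab hP hR (show i ≠ i + 1 by simp)
  exact ⟨W, hW, hWP _ huvP habuv.symm⟩

lemma exists_boxProd_top_of_ends_off_layer [Fintype V] (hG : G.IsEdgeHamLaceable c)
    (hc : ∀ u v, G.Adj u v → c u ≠ c v) (hdeg : ∀ v, (G.neighborSet v).Nontrivial)
    {x y u v : V} (hxy : c x ≠ c y) (huv : G.Adj u v) {i j : ZMod 2} (hij : i ≠ j) :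
    ∃ W : (G □ K₂).Walk (x, j) (y, j), W.IsHamiltonian ∧ s((u, i), (v, i)) ∈ W.edges := by
  obtain ⟨Q, hQ⟩ := hG.exists_isHamiltonian hdeg hxy
  obtain ⟨a, b, hab, p, q, habuv, rfl⟩ :=
    hQ.exists_eq_append_cons_ne (three_le_card_of_neighborSet_nontrivial (hdeg x)) s(u, v)
  obtain ⟨R, hR, huvR⟩ := hG a b (hc a b hab) s(u, v) huv habuv.symm
  obtain ⟨W, hW, -, hWR⟩ := exists_isHamiltonian_boxProd_top_of_detour hab hQ hR hij.symm
  exact ⟨W, hW, hWR _ huvR⟩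

lemma exists_boxProd_top_of_ends_split (hG : G.IsEdgeHamLaceable c)
    (hc : ∀ u v, G.Adj u v → c u ≠ c v) (hdeg : ∀ v, (G.neighborSet v).Nontrivial)
    {x y u v : V} (hxy : c x = c y) (huv : G.Adj u v) {i j : ZMod 2} (hij : i ≠ j) :
    ∃ W : (G □ K₂).Walk (x, i) (y, j), W.IsHamiltonian ∧ s((u, i), (v, i)) ∈ W.edges := by
  obtain ⟨z, hxz, hne⟩ := exists_adj_sym2_ne (hdeg x) s(u, v)
  obtain ⟨P, hP, huvP⟩ := hG x z (hc x z hxz) s(u, v) huv hne.symm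
  obtain ⟨R, hR⟩ := hG.exists_isHamiltonian hdeg (hxy ▸ (hc x z hxz).symm : c z ≠ c y)
  obtain ⟨W, hW, hWP⟩ := exists_isHamiltonian_boxProd_top_of_two_layers hP hR hij
  exact ⟨W, hW, hWP _ huvP⟩

theorem exists_isHamiltonian_boxProd_top [Fintype V] (hG : G.IsEdgeHamLaceable c)
    (hc : ∀ u v, G.Adj u v → c u ≠ c v) (hdeg : ∀ v, (G.neighborSet v).Nontrivial)
    {x y : V × ZMod 2} (hxy : x.2 + c x.1 ≠ y.2 + c y.1) {u v : V × ZMod 2}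
    (huv : (G □ K₂).Adj u v) (hlayer : u.2 = v.2) (hne : s(u, v) ≠ s(x, y)) :
    ∃ W : (G □ K₂).Walk x y, W.IsHamiltonian ∧ s(u, v) ∈ W.edges := by
  rcases x with ⟨x, k⟩; rcases y with ⟨y, l⟩; rcases u with ⟨u, i⟩; rcases v with ⟨v, i'⟩
  obtain rfl : i = i' := hlayer
  have huv' : G.Adj u v := boxProd_adj_left.mp huv
  by_cases hk : k = i <;> by_cases hl : l = i
  · subst k l
    exact hG.exists_boxProd_top_of_ends_in_layer hc hdeg (by simpa using hxy) huv'
      (fun h => hne (congrArg (Sym2.map (·, i)) h)) i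
  · subst k
    exact hG.exists_boxProd_top_of_ends_split hc hdeg
      ((zmod_two_add_ne_add_iff (Ne.symm hl) _ _).mp hxy) huv' (Ne.symm hl)
  · subst l
    obtain ⟨W, hW, hf⟩ := hG.exists_boxProd_top_of_ends_split hc hdeg
      ((zmod_two_add_ne_add_iff hk _ _).mp hxy).symm huv' (Ne.symm hk)
    exact ⟨W.reverse, hW.reverse, by simpa [Walk.edges_reverse] using hf⟩
  · obtain rfl : k = l := (zmod_two_eq_or_eq_of_ne (Ne.symm hl) k).resolve_left hk
    exact hG.exists_boxProd_top_of_ends_off_layer hc hdeg (by simpa using hxy) huv' (Ne.symm hk)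

end IsEdgeHamLaceable

end Hamiltonian

end SimpleGraph

lemma hammingDist_insertNth {n : ℕ} {β : Type*} [DecidableEq β] (i : Fin (n + 1)) (a b : β)
    (u v : Fin n → β) :
    hammingDist (Fin.insertNth (α := fun _ => β) i a u) (i.insertNth b v) =
      (if a = b then 0 else 1) + hammingDist u v := by
  simp only [hammingDist, card_filter]
  rw [Fin.sum_univ_succAbove _ i]
  simp [Fin.insertNth_apply_same, Fin.insertNth_apply_succAbove]

lemma exists_eq_of_hammingDist_lt_card {ι β : Type*} [Fintype ι] [DecidableEq β] {x y : ι → β}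
    (h : hammingDist x y < Fintype.card ι) : ∃ i, x i = y i := by
  by_contra! hne
  simp [hammingDist, hne] at h

lemma parity_insertNth {n : ℕ} (i : Fin (n + 1)) (a : ZMod 2) (u : Fin n → ZMod 2) :
    parity (Fin.insertNth (α := fun _ => ZMod 2) i a u) = a + parity u := by
  simp [parity, Fin.sum_univ_succAbove _ i]

lemma parity_sub_parity {n : ℕ} (u v : Fin n → ZMod 2) :
    parity u - parity v = hammingDist u v := by
  rw [parity, parity, ← sum_sub_distrib, hammingDist, natCast_card_filter]
  refine sum_congr rfl fun i _ => ?_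
  generalize u i = a; generalize v i = b
  revert a b; decide

lemma parity_ne_of_cube_adj {n : ℕ} {u v : Fin n → ZMod 2} (h : (cube n).Adj u v) :
    parity u ≠ parity v := by
  rw [← sub_ne_zero, parity_sub_parity, show hammingDist u v = 1 from h]
  simp

lemma cube_adj_add_single {n : ℕ} (v : Fin n → ZMod 2) (i : Fin n) :
    (cube n).Adj v (v + Pi.single i 1) := by
  simp [cube, hammingDist, Pi.single_apply, filter_eq']

lemma cube_neighborSet_nontrivial {n : ℕ} (hn : 2 ≤ n) (v : Fin n → ZMod 2) :
    ((cube n).neighborSet v).Nontrivial := by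
  refine ⟨_, cube_adj_add_single v ⟨0, by omega⟩, _, cube_adj_add_single v ⟨1, by omega⟩, ?_⟩
  intro h
  simpa [Pi.single_apply, Fin.ext_iff] using congrFun h ⟨0, by omega⟩

def cubeBoxProdIso (n : ℕ) (i : Fin (n + 1)) : (cube n).boxProd K₂ ≃g cube (n + 1) where
  toEquiv := (Equiv.prodComm _ _).trans (Fin.insertNthEquiv (fun _ => ZMod 2) i)
  map_rel_iff' {p q} := by
    change hammingDist (Fin.insertNth (α := fun _ => ZMod 2) i p.2 p.1) (i.insertNth q.2 q.1) = 1
      ↔ _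
    rw [hammingDist_insertNth, boxProd_adj, top_adj]
    change _ ↔ hammingDist p.1 q.1 = 1 ∧ _ ∨ _
    rw [← hammingDist_eq_zero]
    split_ifs with h <;> simp [h]

lemma cubeBoxProdIso_apply {n : ℕ} (i : Fin (n + 1)) (p : (Fin n → ZMod 2) × ZMod 2) :
    cubeBoxProdIso n i p = Fin.insertNth (α := fun _ => ZMod 2) i p.2 p.1 :=
  rfl

lemma parity_cubeBoxProdIso {n : ℕ} (i : Fin (n + 1)) (p : (Fin n → ZMod 2) × ZMod 2) :
    parity (cubeBoxProdIso n i p) = p.2 + parity p.1 :=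
  parity_insertNth i p.2 p.1

instance (n : ℕ) : DecidableRel (cube n).Adj := fun x y =>
  inferInstanceAs (Decidable (hammingDist x y = 1))

-- Adding `1` flips every coordinate, so this path runs round the 4-cycle `Q₂` from `x` to `y`.
lemma cube_two_path (x y : Fin 2 → ZMod 2) (h : parity x ≠ parity y) :
    (cube 2).Adj x (y + 1) ∧ (cube 2).Adj (y + 1) (x + 1) ∧ (cube 2).Adj (x + 1) y ∧
      ∀ w, [x, y + 1, x + 1, y].count w = 1 := by
  revert x y; decide

set_option synthInstance.maxSize 1024 in
lemma cube_two_edge_mem (x y u v : Fin 2 → ZMod 2) (h : parity x ≠ parity y)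
    (huv : (cube 2).Adj u v) (hne : s(u, v) ≠ s(x, y)) :
    s(u, v) ∈ [s(x, y + 1), s(y + 1, x + 1), s(x + 1, y)] := by
  revert x y u v; decide

theorem isEdgeHamLaceable_cube_two : (cube 2).IsEdgeHamLaceable parity := by
  intro x y hxy f hf hfxy
  induction f using Sym2.ind with | _ u v => ?_
  obtain ⟨h₁, h₂, h₃, hcount⟩ := cube_two_path x y hxy
  exact ⟨.cons h₁ (.cons h₂ (.cons h₃ .nil)), hcount, cube_two_edge_mem x y u v hxy hf hfxy⟩

theorem isEdgeHamLaceable_cube_succ {n : ℕ} (hn : 2 ≤ n)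
    (h : (cube n).IsEdgeHamLaceable parity) : (cube (n + 1)).IsEdgeHamLaceable parity := by
  intro x y hxy f hf hfxy
  induction f using Sym2.ind with | _ u v => ?_
  obtain ⟨i, hi⟩ : ∃ i, u i = v i := exists_eq_of_hammingDist_lt_card <| by
    rw [show hammingDist u v = 1 from hf, Fintype.card_fin]; omega
  set φ := cubeBoxProdIso n i
  obtain ⟨x, rfl⟩ := φ.surjective x
  obtain ⟨y, rfl⟩ := φ.surjective y
  obtain ⟨u, rfl⟩ := φ.surjective u
  obtain ⟨v, rfl⟩ := φ.surjective v
  simp only [φ, cubeBoxProdIso_apply, Fin.insertNth_apply_same] at hi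
  rw [parity_cubeBoxProdIso, parity_cubeBoxProdIso] at hxy
  obtain ⟨W, hW, huvW⟩ := h.exists_isHamiltonian_boxProd_top (fun _ _ => parity_ne_of_cube_adj)
    (cube_neighborSet_nontrivial hn) hxy (φ.map_adj_iff.mp hf) hi
    (fun h => hfxy (congrArg (Sym2.map φ) h))
  exact ⟨W.map φ.toHom, hW.map _ φ.bijective, by
    rw [Walk.edges_map]; exact List.mem_map_of_mem huvW⟩

theorem isEdgeHamLaceable_cube {n : ℕ} (hn : 2 ≤ n) : (cube n).IsEdgeHamLaceable parity := by
  induction n, hn using Nat.le_induction with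
  | base => exact isEdgeHamLaceable_cube_two
  | succ n hn ih => exact isEdgeHamLaceable_cube_succ hn ih

theorem stmt1 (n : ℕ) (hn : 2 ≤ n) (x y : Fin n → ZMod 2)
    (hp : parity x ≠ parity y)
    (f : Sym2 (Fin n → ZMod 2)) (hf : f ∈ (cube n).edgeSet) (hfxy : f ≠ s(x, y)) :
    ∃ w : (cube n).Walk x y, w.IsHamiltonian ∧ f ∈ w.edges :=
  isEdgeHamLaceable_cube hn x y hp f hf hfxy
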